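/- Let t > 0 and let K ∈ 𝒦 be 1-stable with parameter (2/3)·t, i.e. 4^m k_m → (2/3)·t as m → +∞, where k_m are the level values of K. Then for every fixed j ∈ ℤ, the j-th scale eigenvalue of the kernel M^i (the 2^i-fold iteration of the 2^i-mollification of K), namely λ^{2^i}_{j−i} = [ (1/2)( Σ_{l < i−j} k_l 2^l − k_{i−j} 2^{i−j} ) ]^{2^i}, converges to e^{-t·2^j} as i → +∞. -/

import Mathlib

open MeasureTheory Set Filter
open scoped ENNReal

/-- The dyadic distance on ℝ⁺: the infimum of the lengths of the dyadic
intervals `[k·2^{-j}, (k+1)·2^{-j})` containing both points (and `0` on the diagonal). -/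
noncomputable def dyadicDist (x y : ℝ) : ℝ :=
  if x = y then 0
  else sInf {r : ℝ | ∃ (j : ℤ) (k : ℕ), r = (2:ℝ) ^ (-j) ∧
    x ∈ Set.Ico ((k : ℝ) * (2:ℝ) ^ (-j)) (((k : ℝ) + 1) * (2:ℝ) ^ (-j)) ∧
    y ∈ Set.Ico ((k : ℝ) * (2:ℝ) ^ (-j)) (((k : ℝ) + 1) * (2:ℝ) ^ (-j))}

open scoped Topology

/-! On the dyadic shell of points at dyadic distance `2 ^ l` from `x₀`, a set of measure
`2 ^ (l - 1)`, the row `K x₀` is the constant `k l`; so the normalisation of `K` says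
`∑ l, k l * 2 ^ l = 2`. With `m = i - j` this turns the eigenvalue into
`1 - (∑_{l ≥ m} k l 2^l + k m 2^m) / 2`, and since `k l ≈ (2/3) t 4^(-l)` the tail sum is
`≈ (4/3) t 2^(-m)`. Hence the eigenvalue is `1 - t 2^j / 2^i + o(2^(-i))`, whose `2^i`-th power
tends to `exp (-t 2^j)`. -/

lemma mem_Ico_mul_iff_floor_div_eq {c : ℝ} (hc : 0 < c) (y : ℝ) (m : ℤ) :
    y ∈ Ico (m * c) ((m + 1) * c) ↔ ⌊y / c⌋ = m := by
  rw [Int.floor_eq_iff, le_div_iff₀ hc, div_lt_iff₀ hc]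
  rfl

lemma floor_div_two_zpow_eq_of_le {x y : ℝ} {l l' : ℤ} (hl : l ≤ l')
    (h : ⌊x / 2 ^ l⌋ = ⌊y / 2 ^ l⌋) : ⌊x / 2 ^ l'⌋ = ⌊y / 2 ^ l'⌋ := by
  obtain ⟨n, rfl⟩ := Int.le.dest hl
  have hdiv : ∀ z : ℝ, z / 2 ^ (l + n) = z / 2 ^ l / ((2 ^ n : ℕ) : ℝ) := fun z => by
    rw [div_div, zpow_add₀ two_ne_zero, zpow_natCast, Nat.cast_pow, Nat.cast_ofNat]
  rw [hdiv, hdiv, Int.floor_div_natCast, Int.floor_div_natCast, h]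

noncomputable def dyadicCell (x : ℝ) (l : ℤ) : Set ℝ :=
  Ico (⌊x / 2 ^ l⌋ * 2 ^ l) ((⌊x / 2 ^ l⌋ + 1) * 2 ^ l)

/-- For `0 ≤ x`, the points of `ℝ⁺` at dyadic distance `2 ^ l` from `x`. -/
noncomputable def dyadicShell (x : ℝ) (l : ℤ) : Set ℝ :=
  dyadicCell x l \ dyadicCell x (l - 1)

section Dyadic

variable {x y : ℝ} {l : ℤ}

lemma mem_dyadicCell_iff : y ∈ dyadicCell x l ↔ ⌊y / 2 ^ l⌋ = ⌊x / 2 ^ l⌋ :=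
  mem_Ico_mul_iff_floor_div_eq (by positivity) y _

lemma mem_dyadicCell_self (x : ℝ) (l : ℤ) : x ∈ dyadicCell x l :=
  mem_dyadicCell_iff.mpr rfl

lemma dyadicCell_mono (x : ℝ) : Monotone (dyadicCell x) := fun _ _ hl _ hy =>
  mem_dyadicCell_iff.mpr (floor_div_two_zpow_eq_of_le hl (mem_dyadicCell_iff.mp hy))

lemma volume_real_dyadicCell (x : ℝ) (l : ℤ) : volume.real (dyadicCell x l) = 2 ^ l := by
  rw [dyadicCell, Real.volume_real_Ico_of_le (by gcongr; linarith)]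
  ring

lemma dyadicCell_subset_Ici (hx : 0 ≤ x) (l : ℤ) : dyadicCell x l ⊆ Ici 0 := fun _ hy =>
  (mul_nonneg (mod_cast Int.floor_nonneg.mpr (by positivity)) (by positivity)).trans hy.1

lemma abs_sub_lt_of_mem_dyadicCell (hy : y ∈ dyadicCell x l) : |y - x| < 2 ^ l := by
  have hx := mem_dyadicCell_self x l
  rw [dyadicCell] at hx hy
  rw [abs_sub_lt_iff]
  constructor <;> linarith [hx.1, hx.2, hy.1, hy.2]

lemma exists_mem_dyadicCell (hx : 0 ≤ x) (hy : 0 ≤ y) : ∃ l, y ∈ dyadicCell x l := by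
  obtain ⟨n, hn⟩ := pow_unbounded_of_one_lt (max x y) one_lt_two
  have hfloor : ∀ z, 0 ≤ z → z ≤ max x y → ⌊z / 2 ^ (n : ℤ)⌋ = 0 := fun z hz hzn => by
    rw [Int.floor_eq_zero_iff, zpow_natCast]
    exact ⟨by positivity, (div_lt_one (by positivity)).mpr (by linarith)⟩
  exact ⟨n, mem_dyadicCell_iff.mpr <| by
    rw [hfloor y hy (le_max_right x y), hfloor x hx (le_max_left x y)]⟩

lemma exists_notMem_dyadicCell (hxy : y ≠ x) : ∃ l, y ∉ dyadicCell x l := by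
  obtain ⟨n, hn⟩ := pow_unbounded_of_one_lt (|y - x|⁻¹) one_lt_two
  refine ⟨-n, fun hy => ?_⟩
  have hpos : 0 < |y - x| := abs_pos.mpr (sub_ne_zero.mpr hxy)
  have := abs_sub_lt_of_mem_dyadicCell hy
  rw [zpow_neg, zpow_natCast, lt_inv_comm₀ hpos (by positivity)] at this
  linarith

lemma exists_mem_dyadicShell (hx : 0 ≤ x) (hy : 0 ≤ y) (hxy : y ≠ x) :
    ∃ l, y ∈ dyadicShell x l := by
  obtain ⟨b, hb⟩ := exists_notMem_dyadicCell hxy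
  have hbdd : ∀ l, y ∈ dyadicCell x l → b ≤ l := fun l hl =>
    le_of_not_ge fun hlb => hb (dyadicCell_mono x hlb hl)
  obtain ⟨L, hL, hleast⟩ := Int.exists_least_of_bdd ⟨b, hbdd⟩ (exists_mem_dyadicCell hx hy)
  exact ⟨L, hL, fun h => by linarith [hleast _ h]⟩

lemma exists_nat_mem_Ico_iff_mem_dyadicCell (hx : 0 ≤ x) (j : ℤ) :
    (∃ k : ℕ, x ∈ Ico ((k : ℝ) * 2 ^ (-j)) ((k + 1) * 2 ^ (-j)) ∧
      y ∈ Ico ((k : ℝ) * 2 ^ (-j)) ((k + 1) * 2 ^ (-j))) ↔ y ∈ dyadicCell x (-j) := by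
  have hc : (0 : ℝ) < 2 ^ (-j) := by positivity
  have hmem (z : ℝ) (k : ℕ) : z ∈ Ico ((k : ℝ) * 2 ^ (-j)) ((k + 1) * 2 ^ (-j)) ↔
      ⌊z / 2 ^ (-j)⌋ = k := by
    exact_mod_cast mem_Ico_mul_iff_floor_div_eq hc z k
  simp only [hmem, mem_dyadicCell_iff]
  constructor
  · rintro ⟨k, hxk, hyk⟩
    rw [hxk, hyk]
  · intro h
    lift ⌊x / 2 ^ (-j)⌋ to ℕ using Int.floor_nonneg.mpr (by positivity) with k
    exact ⟨k, rfl, h⟩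

lemma dyadicDist_eq_of_mem_dyadicShell (hx : 0 ≤ x) (hy : y ∈ dyadicShell x l) :
    dyadicDist x y = 2 ^ l := by
  have hxy : x ≠ y := fun h => hy.2 (h ▸ mem_dyadicCell_self x (l - 1))
  rw [dyadicDist, if_neg hxy]
  refine IsLeast.csInf_eq ⟨⟨-l, ?_⟩, ?_⟩
  · obtain ⟨k, hk⟩ :=
      (exists_nat_mem_Ico_iff_mem_dyadicCell hx (-l)).mpr (by rw [neg_neg]; exact hy.1)
    exact ⟨k, by rw [neg_neg], hk⟩
  · rintro r ⟨j, k, rfl, hk⟩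
    have hj := (exists_nat_mem_Ico_iff_mem_dyadicCell hx j).mp ⟨k, hk⟩
    have : l ≤ -j := le_of_not_gt fun h => hy.2 (dyadicCell_mono x (by omega) hj)
    exact zpow_le_zpow_right₀ one_le_two this

lemma measurableSet_dyadicShell (x : ℝ) (l : ℤ) : MeasurableSet (dyadicShell x l) :=
  measurableSet_Ico.diff measurableSet_Ico

lemma volume_real_dyadicShell (x : ℝ) (l : ℤ) : volume.real (dyadicShell x l) = 2 ^ (l - 1) := by
  rw [dyadicShell, measureReal_sdiff (dyadicCell_mono x (by omega)) measurableSet_Ico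
    (by simp [dyadicCell]), volume_real_dyadicCell, volume_real_dyadicCell, zpow_sub₀ two_ne_zero]
  ring

lemma pairwise_disjoint_dyadicShell (x : ℝ) :
    Pairwise (Function.onFun Disjoint (dyadicShell x)) := by
  refine pairwise_disjoint_on _ |>.mpr fun l l' hl => disjoint_left.mpr fun y hy hy' => ?_
  exact hy'.2 (dyadicCell_mono x (by omega) hy.1)

lemma iUnion_dyadicShell (hx : 0 ≤ x) : ⋃ l, dyadicShell x l = Ici 0 \ {x} := by
  ext y
  simp only [mem_iUnion, Set.mem_sdiff, mem_singleton_iff]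
  refine ⟨fun ⟨l, hl⟩ => ⟨dyadicCell_subset_Ici hx l hl.1, ?_⟩,
    fun ⟨hy, hxy⟩ => exists_mem_dyadicShell hx hy hxy⟩
  rintro rfl
  exact hl.2 (mem_dyadicCell_self y _)

end Dyadic

lemma hasSum_setIntegral_Ici_of_dyadicDist {f : ℝ → ℝ} {k : ℤ → ℝ} {x₀ : ℝ} (hx₀ : 0 ≤ x₀)
    (hf : IntegrableOn f (Ici 0))
    (hfk : ∀ (l : ℤ) (y : ℝ), 0 ≤ y → dyadicDist x₀ y = 2 ^ l → f y = k l) :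
    HasSum (fun l : ℤ => 2 ^ (l - 1) * k l) (∫ y in Ici 0, f y) := by
  have hU := iUnion_dyadicShell hx₀
  have h := hasSum_integral_iUnion (measurableSet_dyadicShell x₀)
    (pairwise_disjoint_dyadicShell x₀) (hU ▸ hf.mono_set sdiff_subset)
  rw [hU, setIntegral_congr_set (sdiff_null_ae_eq_self (measure_singleton x₀))] at h
  suffices hterm : ∀ l, ∫ y in dyadicShell x₀ l, f y = 2 ^ (l - 1) * k l by
    simpa only [hterm] using h
  intro l
  have hconst : EqOn f (fun _ => k l) (dyadicShell x₀ l) := fun y hy =>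
    hfk l y (dyadicCell_subset_Ici hx₀ l hy.1) (dyadicDist_eq_of_mem_dyadicShell hx₀ hy)
  rw [setIntegral_congr_fun (measurableSet_dyadicShell x₀ l) hconst, setIntegral_const,
    volume_real_dyadicShell, smul_eq_mul]

lemma HasSum.tsum_lt_add_tsum_nat {E : Type*} [NormedAddCommGroup E] [CompleteSpace E]
    {f : ℤ → E} {s : E} (hf : HasSum f s) (m : ℤ) :
    ∑' l : {l : ℤ // l < m}, f l + ∑' n : ℕ, f (m + n) = s := by
  have hrange : range (fun n : ℕ => m + n) = {l | l < m}ᶜ := by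
    ext l
    simp only [mem_range, mem_compl_iff, mem_ofPred_eq, not_lt]
    exact ⟨fun ⟨n, hn⟩ => hn ▸ by omega, Int.le.dest⟩
  have hinj : Function.Injective fun n : ℕ => m + n := fun _ _ h =>
    Nat.cast_injective (add_left_cancel h)
  rw [← tsum_range f hinj, hrange]
  exact ((hf.summable.subtype _).tsum_add_tsum_compl (hf.summable.subtype _)).trans hf.tsum_eq

lemma tendsto_tsum_comp_add_mul_pow {a : ℤ → ℝ} {c r : ℝ} (ha : Tendsto a atTop (𝓝 c))
    (hr : |r| < 1) :
    Tendsto (fun m : ℤ => ∑' n : ℕ, a (m + n) * r ^ n) atTop (𝓝 (c * (1 - r)⁻¹)) := by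
  rw [← tsum_geometric_of_abs_lt_one hr, ← tsum_mul_left]
  obtain ⟨M, hM⟩ := eventually_atTop.mp (ha.norm.eventually (gt_mem_nhds (lt_add_one ‖c‖)))
  refine tendsto_tsum_of_dominated_convergence (bound := fun n => (‖c‖ + 1) * |r| ^ n)
    ((summable_geometric_of_lt_one (abs_nonneg r) hr).mul_left _)
    (fun n => (ha.comp (tendsto_atTop_add_const_right _ _ tendsto_id)).mul_const _) ?_
  filter_upwards [eventually_ge_atTop M] with m hm n
  rw [norm_mul, norm_pow, Real.norm_eq_abs r]
  exact mul_le_mul_of_nonneg_right (hM _ (by omega)).le (by positivity)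

lemma tendsto_pow_exp_of_tendsto_mul_sub_one {α : Type*} {L : Filter α} {N : α → ℕ}
    {a : α → ℝ} {c : ℝ} (hN : Tendsto N L atTop)
    (h : Tendsto (fun x => (N x : ℝ) * (a x - 1)) L (𝓝 c)) :
    Tendsto (fun x => a x ^ N x) L (𝓝 (Real.exp c)) := by
  have hN' : Tendsto (fun x => (N x : ℝ)⁻¹) L (𝓝 0) :=
    tendsto_inv_atTop_zero.comp (tendsto_natCast_atTop_atTop.comp hN)
  have ha : Tendsto a L (𝓝 1) := by
    have := (h.mul hN').const_add 1
    rw [mul_zero, add_zero] at this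
    refine this.congr' ?_
    filter_upwards [hN.eventually_ne_atTop 0] with x hx
    field_simp
    ring
  have hpos : ∀ᶠ x in L, 0 < a x := ha.eventually (lt_mem_nhds one_pos)
  -- `1 - 1/a ≤ log a ≤ a - 1` squeezes `N log a`.
  have hlog : Tendsto (fun x => (N x : ℝ) * Real.log (a x)) L (𝓝 c) := by
    refine tendsto_of_tendsto_of_tendsto_of_le_of_le' (g := fun x => (N x : ℝ) * (a x - 1) / a x)
      (div_one c ▸ h.div ha one_ne_zero) h ?_ ?_
    · filter_upwards [hpos] with x hx
      rw [mul_div_assoc, sub_div, div_self hx.ne', one_div]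
      exact mul_le_mul_of_nonneg_left (Real.one_sub_inv_le_log_of_pos hx) (Nat.cast_nonneg _)
    · filter_upwards [hpos] with x hx
      exact mul_le_mul_of_nonneg_left (Real.log_le_sub_one_of_pos hx) (Nat.cast_nonneg _)
  refine ((Real.continuous_exp.tendsto c).comp hlog).congr' ?_
  filter_upwards [hpos] with x hx
  rw [Function.comp_apply, Real.exp_nat_mul, Real.exp_log hx]

lemma tendsto_two_zpow_mul_eigenvalue_sub_one {k : ℤ → ℝ} {c : ℝ}
    (hk : HasSum (fun l : ℤ => k l * 2 ^ l) 2)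
    (hstab : Tendsto (fun m : ℤ => 4 ^ m * k m) atTop (𝓝 c)) :
    Tendsto (fun m : ℤ => 2 ^ m *
      ((1 / 2 : ℝ) * ((∑' l : {l : ℤ // l < m}, k l.1 * 2 ^ l.1) - k m * 2 ^ m) - 1))
      atTop (𝓝 (-(3 / 2 * c))) := by
  have htail := tendsto_tsum_comp_add_mul_pow hstab (r := 1 / 2) (by norm_num [abs_of_pos])
  have hfour (m : ℤ) : (4 : ℝ) ^ m = 2 ^ m * 2 ^ m := by
    rw [← mul_zpow]
    norm_num
  have htail_eq (m : ℤ) : 2 ^ m * ∑' n : ℕ, k (m + n) * 2 ^ (m + n) =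
      ∑' n : ℕ, 4 ^ (m + n) * k (m + n) * (1 / 2) ^ n := by
    rw [← tsum_mul_left]
    refine tsum_congr fun n => ?_
    rw [hfour, zpow_add₀ two_ne_zero, zpow_natCast, one_div, inv_pow]
    field_simp
  have hlim := (htail.add hstab).const_mul (-(1 / 2))
  rw [show -(1 / 2) * (c * (1 - 1 / 2)⁻¹ + c) = -(3 / 2 * c) by ring] at hlim
  refine hlim.congr fun m => ?_
  linear_combination (-(2 : ℝ) ^ m / 2) * hk.tsum_lt_add_tsum_nat m + (1 / 2) * htail_eq m
    - k m / 2 * hfour m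

theorem eigenvalues_converge_general (t : ℝ) (K : ℝ → ℝ → ℝ) (k : ℤ → ℝ)
    (x₀ : ℝ) (hx₀ : 0 ≤ x₀)
    (hKnorm : (∫ y in Set.Ici (0:ℝ), K x₀ y) = 1)
    (hk : ∀ (j : ℤ) (x y : ℝ), 0 ≤ x → 0 ≤ y → dyadicDist x y = (2:ℝ) ^ j → K x y = k j)
    (hstab : Filter.Tendsto (fun m : ℤ => (4:ℝ) ^ m * k m) Filter.atTop (nhds (2 / 3 * t)))
    (j : ℤ) :
    Filter.Tendsto
      (fun i : ℕ =>
        ((1 / 2 : ℝ) * ((∑' l : {l : ℤ // l < (i : ℤ) - j}, k l.1 * (2:ℝ) ^ l.1) -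
          k ((i : ℤ) - j) * (2:ℝ) ^ ((i : ℤ) - j))) ^ (2 ^ i))
      Filter.atTop (nhds (Real.exp (-t * (2:ℝ) ^ j))) := by
  have hint : IntegrableOn (K x₀) (Ici 0) := by
    by_contra h
    exact zero_ne_one (integral_undef h ▸ hKnorm)
  have hsum : HasSum (fun l : ℤ => k l * 2 ^ l) 2 := by
    have h := (hasSum_setIntegral_Ici_of_dyadicDist hx₀ hint fun l y => hk l x₀ y hx₀).mul_left 2
    rw [hKnorm, mul_one] at h
    have hterm (l : ℤ) : 2 * (2 ^ (l - 1) * k l) = k l * 2 ^ l := by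
      rw [zpow_sub₀ two_ne_zero]
      ring
    simpa only [hterm] using h
  have hshift : Tendsto (fun i : ℕ => (i : ℤ) - j) atTop atTop :=
    tendsto_atTop_add_const_right _ (-j) tendsto_natCast_atTop_atTop
  have hscaled := ((tendsto_two_zpow_mul_eigenvalue_sub_one hsum hstab).comp hshift).const_mul
    ((2 : ℝ) ^ j)
  refine tendsto_pow_exp_of_tendsto_mul_sub_one (N := fun i => 2 ^ i)
    (tendsto_pow_atTop_atTop_of_one_lt one_lt_two) ?_
  convert hscaled using 2 with i
  · push_cast
    rw [Function.comp_apply, ← mul_assoc, ← zpow_natCast, ← zpow_add₀ two_ne_zero,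
      add_sub_cancel]
  · ring

/-- Theorem 5 (a): if `K ∈ 𝒦` is `1`-stable with parameter `(2/3)t`, i.e. its level values
satisfy `4^m k_m → (2/3)t`, then for every `j ∈ ℤ` the `j`-th scale eigenvalue of `M^i`,
`λ^{2^i}_{j-i} = [(1/2)(Σ_{l<i-j} k_l 2^l - k_{i-j} 2^{i-j})]^{2^i}`, converges to
`e^{-t·2^j}` as `i → +∞`. -/
theorem eigenvalues_converge (t : ℝ) (ht : 0 < t) (K : ℝ → ℝ → ℝ) (k : ℤ → ℝ)
    (hK0 : ∀ x y : ℝ, 0 ≤ x → 0 ≤ y → 0 ≤ K x y)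
    (hKdist : ∀ x y x' y' : ℝ, 0 ≤ x → 0 ≤ y → 0 ≤ x' → 0 ≤ y' →
      dyadicDist x y = dyadicDist x' y' → K x y = K x' y')
    (x₀ : ℝ) (hx₀ : 0 ≤ x₀)
    (hKnorm : (∫ y in Set.Ici (0:ℝ), K x₀ y) = 1)
    (hk : ∀ (j : ℤ) (x y : ℝ), 0 ≤ x → 0 ≤ y → dyadicDist x y = (2:ℝ) ^ j → K x y = k j)
    (hstab : Filter.Tendsto (fun m : ℤ => (4:ℝ) ^ m * k m) Filter.atTop (nhds (2 / 3 * t)))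
    (j : ℤ) :
    Filter.Tendsto
      (fun i : ℕ =>
        ((1 / 2 : ℝ) * ((∑' l : {l : ℤ // l < (i : ℤ) - j}, k l.1 * (2:ℝ) ^ l.1) -
          k ((i : ℤ) - j) * (2:ℝ) ^ ((i : ℤ) - j))) ^ (2 ^ i))
      Filter.atTop (nhds (Real.exp (-t * (2:ℝ) ^ j))) :=
  eigenvalues_converge_general t K k x₀ hx₀ hKnorm hk hstab j
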